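/- Let Q be the symmetrization of the A_m Dynkin quiver in any orientation, i.e., the symmetric matrix with Q_{ij} = 1 if |i-j| = 1 and 0 otherwise. Then in the rank-2m quantum torus algebra with generators x̂_i, ŷ_i (ŷ_i x̂_j = q^{2δ_{ij}} x̂_j ŷ_i) acting on the module with basis |d₁,…,d_m⟩ (x̂_i shifts d_i by 1, ŷ_i acts by q^{2d_i}), the vector Ψ(q^{-1}x̂₁ŷ₂)Ψ(q^{-1}x̂₂ŷ₃)⋯Ψ(q^{-1}x̂_{m-1}ŷ_m)Ψ(q^{-1}x̂_m)|0,…,0⟩ has coefficients Σ_d (-q)^{2Σ_{i=1}^{m-1} d_i d_{i+1}} ∏_i x_i^{d_i}/(q²;q²)_{d_i} in the wavefunction representation ⟨x|d⟩ = ∏ x_i^{d_i}; that is, its wavefunction equals the motivic generating series P_Q(x,q). -/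

import Mathlib

open scoped BigOperators

/-- The finite q-Pochhammer symbol `(q²;q²)_k = ∏_{j=1}^{k} (1 - q^{2j})`. -/
noncomputable def qfac (q : ℂ) (d : ℕ) : ℂ := ∏ k ∈ Finset.range d, (1 - q ^ (2 * k + 2))

/-- Extension by zero of a tuple indexed by `Fin n` to all of `ℕ`. -/
def pad (n : ℕ) (l : Fin n → ℕ) : ℕ → ℕ := fun i => if h : i < n then l ⟨i, h⟩ else 0

/-- The operator `Ψ(q⁻¹ x̂_i ŷ_j)` acting on the module with basis `|d⟩`, `d ∈ ℕ^m`
(where `x̂_i` shifts `d_i` by one and `ŷ_i` acts by `q^{2 d_i}`), written on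
coefficient vectors:  `(Ψ(q⁻¹x̂_iŷ_j) v)(d) = Σ_{k ≤ d_i} q^{2 k d_j} v(d - k e_i)/(q²;q²)_k`. -/
noncomputable def psiStep (q : ℂ) {m : ℕ} (i j : Fin m) (v : (Fin m → ℕ) → ℂ) :
    (Fin m → ℕ) → ℂ :=
  fun d => ∑ k ∈ Finset.range (d i + 1),
    q ^ (2 * k * d j) / qfac q k * v (Function.update d i (d i - k))

/-- The operator `Ψ(q⁻¹ x̂_i)` on coefficient vectors:
`(Ψ(q⁻¹x̂_i) v)(d) = Σ_{k ≤ d_i} v(d - k e_i)/(q²;q²)_k`. -/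
noncomputable def psiLastStep (q : ℂ) {m : ℕ} (i : Fin m) (v : (Fin m → ℕ) → ℂ) :
    (Fin m → ℕ) → ℂ :=
  fun d => ∑ k ∈ Finset.range (d i + 1),
    (1 / qfac q k) * v (Function.update d i (d i - k))

/-- The vector `Ψ(q⁻¹x̂₁ŷ₂)Ψ(q⁻¹x̂₂ŷ₃)⋯Ψ(q⁻¹x̂_{m-1}ŷ_m)Ψ(q⁻¹x̂_m)|0,…,0⟩`, built by
applying the operators right-to-left to the delta vector at `0`:  `chainVec q m j` is
the result of applying the last `j` operators of the product. -/
noncomputable def chainVec (q : ℂ) (m : ℕ) : ℕ → ((Fin m → ℕ) → ℂ)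
  | 0 => fun d => if d = 0 then 1 else 0
  | j + 1 =>
    if h : m - j - 1 + 1 < m then
      psiStep q ⟨m - j - 1, by omega⟩ ⟨m - j - 1 + 1, h⟩ (chainVec q m j)
    else if h2 : m - j - 1 < m then
      psiLastStep q ⟨m - j - 1, h2⟩ (chainVec q m j)
    else chainVec q m j

/-!
Each factor `Ψ(q⁻¹x̂_aŷ_{a+1})` is applied to a vector supported on `{d | d_l = 0 for l ≤ a}`,
so of the sum defining it only the term `k = d_a` survives: it multiplies by
`q^{2 d_a d_{a+1}} / (q²;q²)_{d_a}` and frees the coordinate `a`. By induction from the right,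
after the last `j` factors the vector is the motivic coefficient restricted to the `d` with
`d_l = 0` for `l < m - j`; since `d_{a-1} = 0` on that support, the new factor is exactly the
quadratic-form contribution `2 d_a d_{a+1}`, and `(-q)^{2n} = q^{2n}`.
-/

open Finset Function

variable {q : ℂ} {m : ℕ}

lemma psiStep_apply_of_vanishing {i j : Fin m} {v : (Fin m → ℕ) → ℂ}
    (hv : ∀ d, d i ≠ 0 → v d = 0) (d : Fin m → ℕ) :
    psiStep q i j v d = q ^ (2 * d i * d j) / qfac q (d i) * v (update d i 0) := by
  rw [psiStep, sum_eq_single_of_mem (d i) (self_mem_range_succ _), Nat.sub_self]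
  intro k hk hne
  rw [hv _ (by simp at hk ⊢; omega), mul_zero]

lemma psiLastStep_apply_of_vanishing {i : Fin m} {v : (Fin m → ℕ) → ℂ}
    (hv : ∀ d, d i ≠ 0 → v d = 0) (d : Fin m → ℕ) :
    psiLastStep q i v d = 1 / qfac q (d i) * v (update d i 0) := by
  rw [psiLastStep, sum_eq_single_of_mem (d i) (self_mem_range_succ _), Nat.sub_self]
  intro k hk hne
  rw [hv _ (by simp at hk ⊢; omega), mul_zero]

@[simp]
lemma qfac_zero : qfac q 0 = 1 :=
  prod_range_zero _

lemma pad_of_le (d : Fin m → ℕ) {l : ℕ} (hl : m ≤ l) : pad m d l = 0 :=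
  dif_neg (by omega)

lemma pad_update (d : Fin m → ℕ) (i : Fin m) (b l : ℕ) :
    pad m (update d i b) l = if l = i then b else pad m d l := by
  unfold pad
  split_ifs with hl hli hli <;> simp_all [Fin.ext_iff]

noncomputable def motivicCoeff (q : ℂ) (m : ℕ) (d : Fin m → ℕ) : ℂ :=
  (-q) ^ (2 * ∑ i ∈ range (m - 1), pad m d i * pad m d (i + 1)) / ∏ i, qfac q (d i)

lemma motivicCoeff_zero : motivicCoeff q m 0 = 1 := by
  simp [motivicCoeff, pad]

lemma sum_pad_mul_pad_eq_add_update {d : Fin m → ℕ} {i : Fin m} (hd : ∀ l < i, d l = 0) :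
    ∑ l ∈ range (m - 1), pad m d l * pad m d (l + 1) =
      d i * pad m d (i + 1) +
        ∑ l ∈ range (m - 1), pad m (update d i 0) l * pad m (update d i 0) (l + 1) := by
  have termwise : ∀ l, pad m d l * pad m d (l + 1) =
      (if l = i then d i * pad m d (i + 1) else 0) +
        pad m (update d i 0) l * pad m (update d i 0) (l + 1) := by
    intro l
    simp only [pad_update]
    by_cases hli : l = i
    · simp [hli, pad, i.isLt]
    by_cases hli' : l + 1 = i
    · have : pad m d l = 0 := by
        simp only [pad, dif_pos (show l < m by omega)]
        exact hd _ (by simp [Fin.lt_def]; omega)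
      simp [hli, hli', this]
    · simp [hli, hli']
  rw [sum_congr rfl fun l _ => termwise l, sum_add_distrib, sum_ite_eq']
  split_ifs with hi
  · rfl
  · rw [pad_of_le d (by simp at hi; omega), mul_zero]

lemma prod_qfac_eq_mul_update (d : Fin m → ℕ) (i : Fin m) :
    ∏ l, qfac q (d l) = qfac q (d i) * ∏ l, qfac q (update d i 0 l) := by
  rw [Fintype.prod_eq_mul_prod_compl i, Fintype.prod_eq_mul_prod_compl i (fun l => qfac q _),
    update_self, qfac_zero, one_mul]
  congr 1
  refine prod_congr rfl fun l hl => ?_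
  rw [update_of_ne (by simpa using hl)]

lemma motivicCoeff_eq_mul_update {d : Fin m → ℕ} {i : Fin m} (hd : ∀ l < i, d l = 0) :
    motivicCoeff q m d =
      q ^ (2 * d i * pad m d (i + 1)) / qfac q (d i) * motivicCoeff q m (update d i 0) := by
  rw [motivicCoeff, motivicCoeff, sum_pad_mul_pad_eq_add_update hd, prod_qfac_eq_mul_update d i,
    div_mul_div_comm, mul_add, pow_add, pow_mul, neg_sq, ← pow_mul, mul_assoc]

lemma chainVec_succ_apply {j : ℕ} {i : Fin m} (hi : (i : ℕ) = m - j - 1)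
    (hv : ∀ d, d i ≠ 0 → chainVec q m j d = 0) (d : Fin m → ℕ) :
    chainVec q m (j + 1) d =
      q ^ (2 * d i * pad m d (i + 1)) / qfac q (d i) * chainVec q m j (update d i 0) := by
  obtain ⟨a, ha⟩ := i
  simp only at hi
  subst hi
  rw [chainVec]
  split_ifs with hstep
  · rw [psiStep_apply_of_vanishing hv]
    simp [pad, hstep]
  · rw [psiLastStep_apply_of_vanishing hv, pad_of_le d (by rw [Fin.val_mk]; omega)]
    simp

lemma chainVec_apply {j : ℕ} (hj : j ≤ m) (d : Fin m → ℕ) :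
    chainVec q m j d =
      if ∀ l : Fin m, (l : ℕ) < m - j → d l = 0 then motivicCoeff q m d else 0 := by
  induction j generalizing d with
  | zero =>
    have support : (∀ l : Fin m, (l : ℕ) < m - 0 → d l = 0) ↔ d = 0 := by
      simp [funext_iff]
    simp only [chainVec, support]
    split_ifs with hd
    · rw [hd, motivicCoeff_zero]
    · rfl
  | succ j ih =>
    set i : Fin m := ⟨m - j - 1, by omega⟩
    have hi : (i : ℕ) = m - j - 1 := rfl
    have hv : ∀ d, d i ≠ 0 → chainVec q m j d = 0 := fun d hd => by
      rw [ih (by omega), if_neg fun h => hd (h i (by omega))]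
    have support : (∀ l : Fin m, (l : ℕ) < m - j → update d i 0 l = 0) ↔
        ∀ l : Fin m, (l : ℕ) < m - (j + 1) → d l = 0 := by
      constructor
      · intro h l hl
        rw [← h l (by omega), update_of_ne (by rintro rfl; omega)]
      · intro h l hl
        rcases eq_or_ne l i with rfl | hne
        · exact update_self ..
        · rw [update_of_ne hne]
          exact h l (by have := Fin.val_ne_of_ne hne; omega)
    rw [chainVec_succ_apply hi hv, ih (by omega)]
    simp only [support]
    split_ifs with hd
    · rw [motivicCoeff_eq_mul_update (i := i) fun l hl => hd l (by rw [Fin.lt_def] at hl; omega)]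
    · rw [mul_zero]

theorem chainVec_eq_motivic_series_general (m : ℕ) (q : ℂ) :
    chainVec q m m = fun d : Fin m → ℕ =>
      (-q) ^ (2 * ∑ i ∈ Finset.range (m - 1), pad m d i * pad m d (i + 1)) /
        ∏ i, qfac q (d i) := by
  funext d
  rw [chainVec_apply le_rfl, if_pos fun l hl => by omega, motivicCoeff]

/-- The wavefunction of `Ψ(q⁻¹x̂₁ŷ₂)⋯Ψ(q⁻¹x̂_{m-1}ŷ_m)Ψ(q⁻¹x̂_m)|0,…,0⟩` is the motivic
generating series of the symmetrized `A_m` quiver (adjacency `Q_{ij} = 1` iff `|i-j|=1`):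
its coefficient on `|d⟩` is `(-q)^{2Σ d_i d_{i+1}} / ∏ (q²;q²)_{d_i}`. -/
theorem chainVec_eq_motivic_series (m : ℕ) (hm : 1 ≤ m) (q : ℂ) (hq : ‖q‖ < 1)
    (hq0 : q ≠ 0) :
    chainVec q m m = fun d : Fin m → ℕ =>
      (-q) ^ (2 * ∑ i ∈ Finset.range (m - 1), pad m d i * pad m d (i + 1)) /
        ∏ i, qfac q (d i) :=
  chainVec_eq_motivic_series_general m q
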